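/- Let R be a commutative k-algebra and B = R_p(t,sigma,H,J) a BR algebra of rank n. For every maximal ideal m of R there exists a simple weight B-module M such that M_m != 0. -/

import Mathlib

open scoped Pointwise TensorProduct

namespace BR

/-- The ordered product `t₁^{α₁} ⋯ tₙ^{αₙ}` in the group of units. -/
def tpow {A : Type*} [Monoid A] {n : ℕ} (t : Fin n → Aˣ) (α : Fin n → ℤ) : Aˣ :=
  ((List.finRange n).map fun i => t i ^ α i).prod

/-- `σ^α = σ₁^{α₁} ⋯ σₙ^{αₙ}` as an algebra automorphism. -/
def σpow {k R : Type*} [CommSemiring k] [Semiring R] [Algebra k R] {n : ℕ}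
    (σ : Fin n → R ≃ₐ[k] R) (α : Fin n → ℤ) : R ≃ₐ[k] R :=
  ((List.finRange n).map fun i => σ i ^ α i).prod

/-- The ideal `I_σ^{(m)}(H, J)`:  `J σ(J) ⋯ σ^{m-1}(J)` for `m > 0`, `R` for `m = 0`,
and `σ⁻¹(H) σ⁻²(H) ⋯ σ^{m}(H)` for `m < 0`. -/
noncomputable def seg {k R : Type*} [Field k] [Ring R] [Algebra k R]
    (σ : R ≃ₐ[k] R) (H J : Submodule k R) (m : ℤ) : Submodule k R :=
  if 0 < m then
    ((List.range m.toNat).map fun i => J.map (σ ^ (i : ℤ)).toLinearMap).prod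
  else if m = 0 then ⊤
  else ((List.range (-m).toNat).map fun i => H.map (σ ^ (-((i : ℤ) + 1))).toLinearMap).prod

/-- `I^{(α)} = I₁^{(α₁)} ⋯ Iₙ^{(αₙ)}`. -/
noncomputable def segVec {k R : Type*} [Field k] [Ring R] [Algebra k R] {n : ℕ}
    (σ : Fin n → R ≃ₐ[k] R) (H J : Fin n → Submodule k R) (α : Fin n → ℤ) :
    Submodule k R :=
  ((List.finRange n).map fun i => seg (σ i) (H i) (J i) (α i)).prod

/-- A Bell–Rogalski datum `(R, t, σ, p, H, J)`. -/
structure IsBRDatum {k R : Type*} [Field k] [Ring R] [Algebra k R] {n : ℕ}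
    (σ : Fin n → R ≃ₐ[k] R) (p : Fin n → Fin n → kˣ)
    (H J : Fin n → Submodule k R) : Prop where
  comm : ∀ i j, σ i * σ j = σ j * σ i
  antisym : ∀ i j, p i j = (p j i)⁻¹
  H_mul_left : ∀ i (r x : R), x ∈ H i → r * x ∈ H i
  H_mul_right : ∀ i (r x : R), x ∈ H i → x * r ∈ H i
  J_mul_left : ∀ i (r x : R), x ∈ J i → r * x ∈ J i
  J_mul_right : ∀ i (r x : R), x ∈ J i → x * r ∈ J i
  mapH : ∀ i j, i ≠ j → (H j).map (σ i).toLinearMap = H j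
  mapJ : ∀ i j, i ≠ j → (J j).map (σ i).toLinearMap = J j
  HH : ∀ i j, i ≠ j → H i * H j = H j * H i
  HJ : ∀ i j, i ≠ j → H i * J j = J j * H i
  JJ : ∀ i j, i ≠ j → J i * J j = J j * J i
  seg_ne_bot : ∀ i (m : ℤ), seg (σ i) (H i) (J i) m ≠ ⊥

/-- A realization of the iterated skew Laurent extension `R_p[t^{±1}; σ]`:
an algebra `A` containing `R`, with units `t i` satisfying the skew commutation
relations, which is a free left `R`-module with basis the monomials `t^α`. -/
structure SkewLaurent (k : Type*) [Field k] {R : Type*} [Ring R] [Algebra k R] {n : ℕ}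
    (σ : Fin n → R ≃ₐ[k] R) (p : Fin n → Fin n → kˣ)
    (A : Type*) [Ring A] [Algebra k A] where
  ι : R →ₐ[k] A
  t : Fin n → Aˣ
  rel_r : ∀ i (r : R), (t i : A) * ι r = ι (σ i r) * (t i : A)
  rel_t : ∀ i j, i ≠ j → (t j : A) * (t i : A) =
    algebraMap k A (p i j) * ((t i : A) * (t j : A))
  repr_exists : ∀ a : A, ∃ c : (Fin n → ℤ) →₀ R,
    a = c.sum fun α r => ι r * (tpow t α : A)
  repr_free : ∀ c : (Fin n → ℤ) →₀ R,
    (c.sum fun α r => ι r * (tpow t α : A)) = 0 → c = 0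

/-- The graded component `B_α = I^{(α)} t^α` of the Bell–Rogalski algebra, as a
`k`-subspace of the ambient skew Laurent extension. -/
noncomputable def brComponent {k R : Type*} [Field k] [Ring R] [Algebra k R] {n : ℕ}
    {σ : Fin n → R ≃ₐ[k] R} {p : Fin n → Fin n → kˣ}
    {A : Type*} [Ring A] [Algebra k A]
    (E : SkewLaurent k σ p A) (H J : Fin n → Submodule k R) (α : Fin n → ℤ) :
    Submodule k A :=
  ((segVec σ H J α).map E.ι.toLinearMap).map (LinearMap.mulRight k ((tpow E.t α : Aˣ) : A))

/-- The Bell–Rogalski algebra `B = ⊕_α I^{(α)} t^α` as a `k`-subspace of the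
ambient skew Laurent extension. -/
noncomputable def brSubmodule {k R : Type*} [Field k] [Ring R] [Algebra k R] {n : ℕ}
    {σ : Fin n → R ≃ₐ[k] R} {p : Fin n → Fin n → kˣ}
    {A : Type*} [Ring A] [Algebra k A]
    (E : SkewLaurent k σ p A) (H J : Fin n → Submodule k R) : Submodule k A :=
  ⨆ α : Fin n → ℤ, brComponent E H J α

/-- The weight space `M_𝔪 = {v ∈ M ∣ 𝔪 ⬝ v = 0}` of a module over an algebra `B`
receiving a map from `R`. -/
def weightSpace {k R B : Type*} [Field k] [CommRing R] [Algebra k R]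
    [Ring B] [Algebra k B] (ιB : R →ₐ[k] B)
    (M : Type*) [AddCommGroup M] [Module B M] (m : Ideal R) : AddSubgroup M where
  carrier := {v | ∀ r ∈ m, ιB r • v = 0}
  zero_mem' := by intro r hr; simp
  add_mem' := by intro a b ha hb r hr; rw [smul_add, ha r hr, hb r hr, add_zero]
  neg_mem' := by intro a ha r hr; rw [smul_neg, ha r hr, neg_zero]

/-- `M` is a weight module: the direct sum of its weight spaces over maximal ideals. -/
def IsWeightModule {k R B : Type*} [Field k] [CommRing R] [Algebra k R]
    [Ring B] [Algebra k B] (ιB : R →ₐ[k] B)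
    (M : Type*) [AddCommGroup M] [Module B M] : Prop :=
  (⨆ m : MaximalSpectrum R, weightSpace ιB M m.asIdeal) = ⊤ ∧
    iSupIndep fun m : MaximalSpectrum R => weightSpace ιB M m.asIdeal

/-- A bundled simple weight module over `B`. -/
structure SimpleWeightWitness.{w, uk, uR, uB} (k : Type uk) [Field k] {R : Type uR}
    [CommRing R] [Algebra k R]
    (B : Type uB) [Ring B] [Algebra k B] (ιB : R →ₐ[k] B) where
  M : Type w
  [acg : AddCommGroup M]
  [mod : Module B M]
  simple : IsSimpleModule B M
  weight : IsWeightModule ιB M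

attribute [instance] SimpleWeightWitness.acg SimpleWeightWitness.mod

/-- The support of a bundled weight module. -/
def SimpleWeightWitness.supp {k : Type*} [Field k] {R : Type*} [CommRing R] [Algebra k R]
    {B : Type*} [Ring B] [Algebra k B] {ιB : R →ₐ[k] B}
    (W : SimpleWeightWitness k B ιB) : Set (MaximalSpectrum R) :=
  {m' | weightSpace ιB W.M m'.asIdeal ≠ ⊥}

/-- Isomorphism of bundled weight modules, as `B`-modules. -/
def SimpleWeightWitness.Iso {k : Type*} [Field k] {R : Type*} [CommRing R] [Algebra k R]
    {B : Type*} [Ring B] [Algebra k B] {ιB : R →ₐ[k] B}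
    (W : SimpleWeightWitness k B ιB) (W' : SimpleWeightWitness k B ιB) : Prop :=
  Nonempty (W.M ≃ₗ[B] W'.M)

/-- Gelfand–Kirillov dimension of a `k`-algebra. -/
noncomputable def GKdim (k A : Type*) [Field k] [Ring A] [Algebra k A] : ENNReal :=
  ⨆ S : Finset A, Filter.limsup
    (fun n : ℕ => ENNReal.ofReal (Real.logb n
      (Module.finrank k ↥((Submodule.span k (insert (1 : A) (S : Set A))) ^ n))))
    Filter.atTop

/-- An automorphism is locally algebraic if every orbit is contained in a
finite-dimensional subspace. -/
def LocallyAlgebraic {k R : Type*} [Field k] [Ring R] [Algebra k R]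
    (σ : R ≃ₐ[k] R) : Prop :=
  ∀ r : R, ∃ V : Submodule k R, FiniteDimensional k ↥V ∧ ∀ m : ℕ, (σ ^ m) r ∈ V

/-- The defining relations of a twisted generalized Weyl algebra of type `(A₁)ⁿ`. -/
def TGWARels (k : Type*) [Field k] {R : Type*} [Ring R] [Algebra k R] {n : ℕ}
    (σ : Fin n → R ≃ₐ[k] R) (a : Fin n → R) (γ μ : Fin n → Fin n → kˣ)
    {T : Type*} [Ring T] [Algebra k T]
    (ι : R →ₐ[k] T) (Xp Xm : Fin n → T) : Prop :=
  (∀ i (r : R), Xp i * ι r = ι (σ i r) * Xp i) ∧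
  (∀ i (r : R), Xm i * ι r = ι ((σ i)⁻¹ r) * Xm i) ∧
  (∀ i, Xm i * Xp i = ι (a i)) ∧
  (∀ i, Xp i * Xm i = ι (σ i (a i))) ∧
  (∀ i j, i ≠ j → Xp i * Xm j = ((μ i j : kˣ) : k) • (Xm j * Xp i)) ∧
  (∀ i j, i ≠ j → Xp i * Xp j = ((γ i j * (μ i j)⁻¹ : kˣ) : k) • (Xp j * Xp i)) ∧
  (∀ i j, i ≠ j → Xm j * Xm i = ((γ i j * (μ j i)⁻¹ : kˣ) : k) • (Xm i * Xm j))

/-- A realization of the twisted generalized Weyl algebra `A_μ(R, σ, a)` of type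
`(A₁)ⁿ`: it satisfies the defining relations, is `ℤⁿ`-graded with `deg Xᵢ± = ±eᵢ`,
and is universal with respect to the relations. -/
structure TGWA (k : Type*) [Field k] {R : Type*} [Ring R] [Algebra k R] {n : ℕ}
    (σ : Fin n → R ≃ₐ[k] R) (a : Fin n → R) (γ μ : Fin n → Fin n → kˣ)
    (T : Type*) [Ring T] [Algebra k T] where
  ι : R →ₐ[k] T
  Xp : Fin n → T
  Xm : Fin n → T
  rels : TGWARels k σ a γ μ ι Xp Xm
  grading : (Fin n → ℤ) → Submodule k T
  grading_internal : DirectSum.IsInternal grading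
  grading_mul : ∀ (α β : Fin n → ℤ) (x y : T),
    x ∈ grading α → y ∈ grading β → x * y ∈ grading (α + β)
  ι_mem : ∀ r, ι r ∈ grading 0
  Xp_mem : ∀ i, Xp i ∈ grading (Pi.single i 1)
  Xm_mem : ∀ i, Xm i ∈ grading (-Pi.single i 1)
  free : ∀ {C : Type} [Ring C] [Algebra k C] (ιC : R →ₐ[k] C) (Yp Ym : Fin n → C),
    TGWARels k σ a γ μ ιC Yp Ym →
    ∃! f : T →ₐ[k] C, f.comp ι = ιC ∧ (∀ i, f (Xp i) = Yp i) ∧ (∀ i, f (Xm i) = Ym i)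



/-! ### Auxiliary lemmas -/

section GroupMerge
variable {G : Type*} [Group G]

lemma list_prod_zpow_mul {n : ℕ} (f : Fin n → G)
    (hc : ∀ i j, i ≠ j → Commute (f i) (f j)) (β α : Fin n → ℤ) :
    ∀ L : List (Fin n), L.Pairwise (· ≠ ·) →
    (L.map fun i => f i ^ β i).prod * (L.map fun i => f i ^ α i).prod
      = (L.map fun i => f i ^ (β i + α i)).prod := by
  intro L hL
  induction L with
  | nil => simp
  | cons i L ih =>
    rcases List.pairwise_cons.mp hL with ⟨hi, hL'⟩
    have hcomm : Commute (f i ^ α i) (L.map fun j => f j ^ β j).prod := by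
      apply Commute.list_prod_right
      intro x hx
      rcases List.mem_map.mp hx with ⟨j, hj, rfl⟩
      exact ((hc i j (hi j hj)).zpow_zpow _ _)
    simp only [List.map_cons, List.prod_cons]
    rw [← ih hL']
    rw [mul_assoc (f i ^ β i), ← mul_assoc _ (f i ^ α i), ← hcomm.eq,
      mul_assoc (f i ^ α i), ← mul_assoc (f i ^ β i), ← zpow_add]

end GroupMerge

section QC
variable {k A : Type*} [Field k] [Ring A] [Algebra k A]

/-- scalar units -/
def BRcu (k : Type*) {A : Type*} [Field k] [Ring A] [Algebra k A] : kˣ →* Aˣ :=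
  Units.map (algebraMap k A).toMonoidHom

lemma BRcu_coe (c : kˣ) : ((BRcu k (A := A) c : Aˣ) : A) = algebraMap k A c := rfl

lemma BRcu_central (c : kˣ) (u : Aˣ) : Commute (BRcu k (A := A) c) u := by
  apply Units.ext
  show ((BRcu k c : Aˣ) : A) * u = u * ((BRcu k c : Aˣ) : A)
  simp only [BRcu, Units.coe_map, RingHom.toMonoidHom_eq_coe, MonoidHom.coe_coe]
  exact (Algebra.commutes _ _)

lemma BRcu_pull (c : kˣ) (x y : Aˣ) : x * (BRcu k c * y) = BRcu k c * (x * y) := by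
  rw [← mul_assoc, ← (BRcu_central c x).eq, mul_assoc]

/-- q-commutation up to a scalar in `k`. -/
def BRqc (k : Type*) {A : Type*} [Field k] [Ring A] [Algebra k A] (u v : Aˣ) : Prop :=
  ∃ c : kˣ, v * u = BRcu k c * (u * v)

lemma BRqc.symm {u v : Aˣ} (h : BRqc k u v) : BRqc k v u := by
  obtain ⟨c, hc⟩ := h
  refine ⟨c⁻¹, ?_⟩
  rw [map_inv, hc, inv_mul_cancel_left]

lemma BRqc.one_right (u : Aˣ) : BRqc k u 1 := ⟨1, by simp⟩

lemma BRqc.mul_right {u v w : Aˣ} (hv : BRqc k u v) (hw : BRqc k u w) :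
    BRqc k u (v * w) := by
  obtain ⟨cv, hcv⟩ := hv
  obtain ⟨cw, hcw⟩ := hw
  refine ⟨cw * cv, ?_⟩
  calc v * w * u = v * (BRcu k cw * (u * w)) := by rw [mul_assoc, hcw]
    _ = BRcu k cw * (v * u * w) := by rw [BRcu_pull, mul_assoc]
    _ = BRcu k cw * (BRcu k cv * (u * v) * w) := by rw [hcv]
    _ = BRcu k (cw * cv) * (u * (v * w)) := by
        rw [map_mul, mul_assoc (BRcu k cv), mul_assoc, mul_assoc]

lemma BRqc.inv_right {u v : Aˣ} (h : BRqc k u v) : BRqc k u v⁻¹ := by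
  obtain ⟨c, hc⟩ := h
  refine ⟨c⁻¹, ?_⟩
  have h2 : u * v⁻¹ = BRcu k c * (v⁻¹ * u) := by
    calc u * v⁻¹ = v⁻¹ * (v * u) * v⁻¹ := by group
      _ = v⁻¹ * (BRcu k c * (u * v)) * v⁻¹ := by rw [hc]
      _ = BRcu k c * (v⁻¹ * (u * v) * v⁻¹) := by rw [BRcu_pull, mul_assoc]
      _ = BRcu k c * (v⁻¹ * u) := by group
  rw [map_inv, h2, inv_mul_cancel_left]

lemma BRqc.zpow_right {u v : Aˣ} (h : BRqc k u v) (m : ℤ) : BRqc k u (v ^ m) := by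
  have hn : ∀ s : ℕ, BRqc k u (v ^ s) := by
    intro s
    induction s with
    | zero => simpa using BRqc.one_right u
    | succ s ih => rw [pow_succ]; exact ih.mul_right h
  cases m with
  | ofNat s => rw [Int.ofNat_eq_coe, zpow_natCast]; exact hn s
  | negSucc s => rw [zpow_negSucc]; exact (hn (s + 1)).inv_right

lemma BRqc.zpow_zpow {u v : Aˣ} (h : BRqc k u v) (a b : ℤ) : BRqc k (u ^ a) (v ^ b) :=
  (((h.zpow_right b).symm).zpow_right a).symm

lemma BRqc.list_prod_right {u : Aˣ} {L : List Aˣ} (h : ∀ v ∈ L, BRqc k u v) :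
    BRqc k u L.prod := by
  induction L with
  | nil => simpa using BRqc.one_right u
  | cons v L ih =>
    rw [List.prod_cons]
    exact (h v (by simp)).mul_right (ih fun w hw => h w (List.mem_cons_of_mem _ hw))

end QC

section Merge
variable {k A : Type*} [Field k] [Ring A] [Algebra k A] {n : ℕ}

lemma tpow_merge_list (t : Fin n → Aˣ)
    (hqc : ∀ i j, i ≠ j → BRqc k (t i) (t j)) (β α : Fin n → ℤ) :
    ∀ L : List (Fin n), L.Pairwise (· ≠ ·) →
    ∃ c : kˣ, (L.map fun i => t i ^ β i).prod * (L.map fun i => t i ^ α i).prod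
      = BRcu k c * (L.map fun i => t i ^ (β i + α i)).prod := by
  intro L hL
  induction L with
  | nil => exact ⟨1, by simp⟩
  | cons i L ih =>
    rcases List.pairwise_cons.mp hL with ⟨hi, hL'⟩
    obtain ⟨c2, h2⟩ := ih hL'
    have hq : BRqc k (t i ^ α i) (L.map fun j => t j ^ β j).prod := by
      apply BRqc.list_prod_right
      intro v hv
      rcases List.mem_map.mp hv with ⟨j, hj, rfl⟩
      exact (hqc i j (hi j hj)).zpow_zpow _ _
    obtain ⟨c1, h1⟩ := hq
    refine ⟨c1 * c2, ?_⟩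
    simp only [List.map_cons, List.prod_cons]
    calc t i ^ β i * (L.map fun j => t j ^ β j).prod * (t i ^ α i * (L.map fun j => t j ^ α j).prod)
        = t i ^ β i * ((L.map fun j => t j ^ β j).prod * t i ^ α i) * (L.map fun j => t j ^ α j).prod := by
          rw [mul_assoc, mul_assoc, mul_assoc]
      _ = t i ^ β i * (BRcu k c1 * (t i ^ α i * (L.map fun j => t j ^ β j).prod)) * (L.map fun j => t j ^ α j).prod := by
          rw [h1]
      _ = BRcu k c1 * (t i ^ (β i + α i) * ((L.map fun j => t j ^ β j).prod * (L.map fun j => t j ^ α j).prod)) := by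
          rw [BRcu_pull, zpow_add]
          rw [mul_assoc (BRcu k c1), mul_assoc, mul_assoc, mul_assoc]
      _ = BRcu k c1 * (t i ^ (β i + α i) * (BRcu k c2 * (L.map fun j => t j ^ (β j + α j)).prod)) := by
          rw [h2]
      _ = BRcu k (c1 * c2) * (t i ^ (β i + α i) * (L.map fun j => t j ^ (β j + α j)).prod) := by
          rw [BRcu_pull (y := (L.map fun j => t j ^ (β j + α j)).prod), map_mul, mul_assoc]

end Merge

section CommRel
variable {k R A : Type*} [Field k] [CommRing R] [Algebra k R] [Ring A] [Algebra k A] {n : ℕ}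

/-- `u ι(r) = ι(τ r) u`. -/
def BRcr (ι : R →ₐ[k] A) (u : Aˣ) (τ : R ≃ₐ[k] R) : Prop :=
  ∀ r : R, (u : A) * ι r = ι (τ r) * (u : A)

lemma BRcr.one (ι : R →ₐ[k] A) : BRcr ι 1 1 := fun r => by simp

lemma BRcr.mul {ι : R →ₐ[k] A} {u v : Aˣ} {τ ρ : R ≃ₐ[k] R}
    (hu : BRcr ι u τ) (hv : BRcr ι v ρ) : BRcr ι (u * v) (τ * ρ) := by
  intro r
  rw [Units.val_mul, mul_assoc, hv r, ← mul_assoc, hu (ρ r), mul_assoc, AlgEquiv.mul_apply]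

lemma BRcr.inv {ι : R →ₐ[k] A} {u : Aˣ} {τ : R ≃ₐ[k] R}
    (hu : BRcr ι u τ) : BRcr ι u⁻¹ τ⁻¹ := by
  intro r
  have h2 : (u : A) * ι (τ⁻¹ r) = ι r * (u : A) := by
    rw [hu (τ⁻¹ r)]
    congr 2
    show τ (τ.symm r) = r
    exact τ.apply_symm_apply r
  calc (↑u⁻¹ : A) * ι r = ↑u⁻¹ * (ι r * ↑u) * ↑u⁻¹ := by
        rw [← mul_assoc, Units.mul_inv_cancel_right]
    _ = ↑u⁻¹ * ((u : A) * ι (τ⁻¹ r)) * ↑u⁻¹ := by rw [h2]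
    _ = ι (τ⁻¹ r) * ↑u⁻¹ := by rw [← mul_assoc, Units.inv_mul, one_mul]

lemma BRcr.pow {ι : R →ₐ[k] A} {u : Aˣ} {τ : R ≃ₐ[k] R}
    (hu : BRcr ι u τ) (s : ℕ) : BRcr ι (u ^ s) (τ ^ s) := by
  induction s with
  | zero => simpa using BRcr.one ι
  | succ s ih => rw [pow_succ, pow_succ]; exact ih.mul hu

lemma BRcr.zpow {ι : R →ₐ[k] A} {u : Aˣ} {τ : R ≃ₐ[k] R}
    (hu : BRcr ι u τ) (m : ℤ) : BRcr ι (u ^ m) (τ ^ m) := by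
  cases m with
  | ofNat s => rw [Int.ofNat_eq_coe, zpow_natCast, zpow_natCast]; exact hu.pow s
  | negSucc s => rw [zpow_negSucc, zpow_negSucc]; exact (hu.pow (s + 1)).inv

lemma BRcr.list_prod {ι : R →ₐ[k] A} (t : Fin n → Aˣ) (σ : Fin n → R ≃ₐ[k] R)
    (h : ∀ i, BRcr ι (t i) (σ i)) (α : Fin n → ℤ) (L : List (Fin n)) :
    BRcr ι ((L.map fun i => t i ^ α i).prod) ((L.map fun i => σ i ^ α i).prod) := by
  induction L with
  | nil => simpa using BRcr.one ι
  | cons i L ih =>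
    simp only [List.map_cons, List.prod_cons]
    exact ((h i).zpow (α i)).mul ih

end CommRel

section AddSubgroupEquiv

variable {G H : Type*} [AddGroup G] [AddGroup H]

/-- an additive equivalence induces an order isomorphism of subgroup lattices. -/
def addSubgroupMapEquiv (e : G ≃+ H) : AddSubgroup G ≃o AddSubgroup H where
  toFun := AddSubgroup.map e.toAddMonoidHom
  invFun := AddSubgroup.map e.symm.toAddMonoidHom
  left_inv S := by
    ext x
    simp only [AddSubgroup.mem_map, AddEquiv.coe_toAddMonoidHom]
    constructor
    · rintro ⟨y, ⟨z, hz, rfl⟩, rfl⟩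
      simpa using hz
    · intro hx
      exact ⟨e x, ⟨x, hx, rfl⟩, e.symm_apply_apply x⟩
  right_inv S := by
    ext x
    simp only [AddSubgroup.mem_map, AddEquiv.coe_toAddMonoidHom]
    constructor
    · rintro ⟨y, ⟨z, hz, rfl⟩, rfl⟩
      simpa using hz
    · intro hx
      exact ⟨e.symm x, ⟨x, hx, rfl⟩, e.apply_symm_apply x⟩
  map_rel_iff' {S T} := by
    constructor
    · intro h x hx
      have := h (AddSubgroup.mem_map_of_mem _ hx)
      rcases AddSubgroup.mem_map.mp this with ⟨y, hy, hxy⟩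
      have : y = x := e.injective hxy
      exact this ▸ hy
    · exact fun h => AddSubgroup.map_mono h

end AddSubgroupEquiv

section SkewAux

universe v1 v2 v3

variable {k : Type v1} {R : Type v2} {A : Type v3}
variable [Field k] [CommRing R] [Algebra k R] [Ring A] [Algebra k A]
variable {n : ℕ} {σ : Fin n → R ≃ₐ[k] R} {p : Fin n → Fin n → kˣ}

lemma tpow_zero (t : Fin n → Aˣ) : tpow t (0 : Fin n → ℤ) = 1 := by
  unfold tpow
  apply List.prod_eq_one
  intro x hx
  rcases List.mem_map.mp hx with ⟨i, _, rfl⟩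
  simp

lemma σpow_zero (σ : Fin n → R ≃ₐ[k] R) : σpow σ (0 : Fin n → ℤ) = 1 := by
  unfold σpow
  apply List.prod_eq_one
  intro x hx
  rcases List.mem_map.mp hx with ⟨i, _, rfl⟩
  simp

lemma σpow_mul (hc : ∀ i j, σ i * σ j = σ j * σ i) (β α : Fin n → ℤ) :
    σpow σ β * σpow σ α = σpow σ (β + α) := by
  have := list_prod_zpow_mul σ (fun i j _ => hc i j) β α (List.finRange n)
    (List.nodup_finRange n)
  unfold σpow
  convert this using 3
  rfl

lemma σpow_symm_shift (hc : ∀ i j, σ i * σ j = σ j * σ i) (β α : Fin n → ℤ) (r : R) :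
    (σpow σ (β + α)).symm ((σpow σ β) r) = (σpow σ α).symm r := by
  rw [AlgEquiv.symm_apply_eq, ← σpow_mul hc β α, AlgEquiv.mul_apply, AlgEquiv.apply_symm_apply]

lemma BRqc_t (E : SkewLaurent k σ p A) {i j : Fin n} (hij : i ≠ j) :
    BRqc k (E.t i) (E.t j) := by
  refine ⟨p i j, Units.ext ?_⟩
  show ((E.t j : A)) * (E.t i : A) = ((BRcu k (p i j) : Aˣ) : A) * ((E.t i : A) * (E.t j : A))
  rw [BRcu_coe]
  exact E.rel_t i j hij

lemma tpow_mul_tpow (E : SkewLaurent k σ p A) (β α : Fin n → ℤ) :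
    ∃ c : kˣ, tpow E.t β * tpow E.t α = BRcu k c * tpow E.t (β + α) := by
  obtain ⟨c, hc⟩ := tpow_merge_list E.t (fun i j h => BRqc_t E h) β α (List.finRange n)
    (List.nodup_finRange n)
  refine ⟨c, ?_⟩
  unfold tpow
  convert hc using 3
  rfl

lemma tpow_commrel (E : SkewLaurent k σ p A) (α : Fin n → ℤ) :
    BRcr E.ι (tpow E.t α) (σpow σ α) :=
  BRcr.list_prod E.t σ (fun i => E.rel_r i) α (List.finRange n)

/-- The representation map `c ↦ Σ ι(c_α) t^α`. -/
def Trep (E : SkewLaurent k σ p A) (c : (Fin n → ℤ) →₀ R) : A :=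
  c.sum fun α r => E.ι r * ((tpow E.t α : Aˣ) : A)

lemma Trep_add (E : SkewLaurent k σ p A) (c d : (Fin n → ℤ) →₀ R) :
    Trep E (c + d) = Trep E c + Trep E d :=
  Finsupp.sum_add_index' (fun α => by simp [Trep]) (fun α b1 b2 => by rw [map_add, add_mul])

lemma Trep_zero (E : SkewLaurent k σ p A) : Trep E 0 = 0 :=
  Finsupp.sum_zero_index

lemma Trep_single (E : SkewLaurent k σ p A) (α : Fin n → ℤ) (r : R) :
    Trep E (Finsupp.single α r) = E.ι r * ((tpow E.t α : Aˣ) : A) :=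
  Finsupp.sum_single_index (by simp)

lemma Trep_injective (E : SkewLaurent k σ p A) : Function.Injective (Trep E) := by
  have := (injective_iff_map_eq_zero (AddMonoidHom.mk' (Trep E) (Trep_add E))).2
  exact this fun c hc => E.repr_free c hc

/-- The twisted maximal ideal `σ^γ(𝔪₀)`. -/
def twist (σ : Fin n → R ≃ₐ[k] R) (m0 : Ideal R) (γ : Fin n → ℤ) : Ideal R :=
  m0.comap ((σpow σ γ).symm : R ≃ₐ[k] R)

lemma mem_twist {σ : Fin n → R ≃ₐ[k] R} {m0 : Ideal R} {γ : Fin n → ℤ} {r : R} :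
    r ∈ twist σ m0 γ ↔ (σpow σ γ).symm r ∈ m0 := Iff.rfl

/-- The additive monoid of elements whose coefficients lie in the twisted ideals. -/
def goodSet (E : SkewLaurent k σ p A) (m0 : Ideal R) : AddSubmonoid A where
  carrier := {a | ∃ c : (Fin n → ℤ) →₀ R, a = Trep E c ∧ ∀ γ, c γ ∈ twist σ m0 γ}
  zero_mem' := ⟨0, (Trep_zero E).symm, fun γ => by simp⟩
  add_mem' := by
    rintro a b ⟨c, rfl, hc⟩ ⟨d, rfl, hd⟩
    exact ⟨c + d, (Trep_add E c d).symm, fun γ => by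
      rw [Finsupp.add_apply]; exact add_mem (hc γ) (hd γ)⟩

lemma mono_mul_mono_mem (hcomm : ∀ i j, σ i * σ j = σ j * σ i)
    (E : SkewLaurent k σ p A) (m0 : Ideal R) {y r : R} {β α : Fin n → ℤ}
    (hr : r ∈ twist σ m0 α) :
    E.ι y * ((tpow E.t β : Aˣ) : A) * (E.ι r * ((tpow E.t α : Aˣ) : A)) ∈ goodSet E m0 := by
  obtain ⟨c, hc⟩ := tpow_mul_tpow E β α
  have hcA : ((tpow E.t β : Aˣ) : A) * ((tpow E.t α : Aˣ) : A)
      = algebraMap k A c * ((tpow E.t (β + α) : Aˣ) : A) := by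
    rw [← BRcu_coe, ← Units.val_mul, ← Units.val_mul, hc]
  refine ⟨Finsupp.single (β + α) (algebraMap k R c * (y * σpow σ β r)), ?_, ?_⟩
  · rw [Trep_single]
    calc E.ι y * ((tpow E.t β : Aˣ) : A) * (E.ι r * ((tpow E.t α : Aˣ) : A))
        = E.ι y * (((tpow E.t β : Aˣ) : A) * E.ι r) * ((tpow E.t α : Aˣ) : A) := by
          rw [mul_assoc, mul_assoc, mul_assoc]
      _ = E.ι y * (E.ι (σpow σ β r) * ((tpow E.t β : Aˣ) : A)) * ((tpow E.t α : Aˣ) : A) := by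
          rw [tpow_commrel E β r]
      _ = E.ι (y * σpow σ β r) * (((tpow E.t β : Aˣ) : A) * ((tpow E.t α : Aˣ) : A)) := by
          rw [map_mul, mul_assoc, mul_assoc, mul_assoc]
      _ = E.ι (y * σpow σ β r) * (algebraMap k A c * ((tpow E.t (β + α) : Aˣ) : A)) := by
          rw [hcA]
      _ = E.ι (algebraMap k R c * (y * σpow σ β r)) * ((tpow E.t (β + α) : Aˣ) : A) := by
          simp only [map_mul, AlgHom.commutes]
          rw [← mul_assoc]
          congr 1
          exact (Algebra.commutes (c : k) (E.ι y * E.ι (σpow σ β r))).symm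
  · intro γ
    rw [Finsupp.single_apply]
    split_ifs with h
    · subst h
      rw [mem_twist, map_mul, map_mul]
      have hmid : (σpow σ (β + α)).symm (σpow σ β r) ∈ m0 := by
        rw [σpow_symm_shift hcomm]
        exact hr
      exact m0.mul_mem_left _ (m0.mul_mem_left _ hmid)
    · exact zero_mem _

lemma goodSet_mul_left (hcomm : ∀ i j, σ i * σ j = σ j * σ i)
    (E : SkewLaurent k σ p A) (m0 : Ideal R) (a x : A) (hx : x ∈ goodSet E m0) :
    a * x ∈ goodSet E m0 := by
  obtain ⟨cx, rfl, hcx⟩ := hx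
  have key : ∀ (y : R) (β : Fin n → ℤ) (c : (Fin n → ℤ) →₀ R),
      (∀ γ, c γ ∈ twist σ m0 γ) →
      E.ι y * ((tpow E.t β : Aˣ) : A) * Trep E c ∈ goodSet E m0 := by
    intro y β c
    induction c using Finsupp.induction with
    | zero => intro _; rw [Trep_zero, mul_zero]; exact zero_mem _
    | single_add α r f hf hr0 ih =>
      intro hc
      rw [Trep_add, mul_add]
      refine add_mem ?_ (ih ?_)
      · rw [Trep_single]
        refine mono_mul_mono_mem hcomm E m0 ?_
        have := hc α
        rwa [Finsupp.add_apply, Finsupp.single_eq_same,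
          Finsupp.notMem_support_iff.mp hf, add_zero] at this
      · intro γ
        by_cases hγ : γ = α
        · subst hγ
          rw [Finsupp.notMem_support_iff.mp hf]
          exact zero_mem _
        · have := hc γ
          rwa [Finsupp.add_apply, Finsupp.single_eq_of_ne hγ, zero_add] at this
  obtain ⟨ca, ha⟩ := E.repr_exists a
  rw [ha, Finsupp.sum_mul]
  refine AddSubmonoid.sum_mem _ fun β hβ => ?_
  exact key (ca β) β cx hcx

lemma one_not_mem_goodSet (E : SkewLaurent k σ p A) {m0 : Ideal R} (hm0 : m0 ≠ ⊤) :
    (1 : A) ∉ goodSet E m0 := by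
  rintro ⟨c, h1, hc⟩
  have hone : Trep E (Finsupp.single 0 1) = 1 := by
    rw [Trep_single, tpow_zero]
    simp
  have hceq : c = Finsupp.single 0 1 := Trep_injective E (by rw [← h1, hone])
  have := hc 0
  rw [hceq, Finsupp.single_eq_same, mem_twist, map_one] at this
  exact hm0 ((Ideal.eq_top_iff_one m0).2 this)

end SkewAux

set_option synthInstance.maxHeartbeats 1000000 in
set_option maxHeartbeats 2000000 in
/-- For every maximal ideal `𝔪` of `R` there exists a simple
weight `B`-module `M` with `M_𝔪 ≠ 0`. -/
theorem brAlgebra_exists_simple_weight_module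
    {k : Type uk} {R : Type uR} {A : Type uA}
    [Field k] [CommRing R] [Algebra k R] [Ring A] [Algebra k A]
    {n : ℕ} {σ : Fin n → R ≃ₐ[k] R} {p : Fin n → Fin n → kˣ}
    {H J : Fin n → Submodule k R} (hD : IsBRDatum σ p H J)
    (E : SkewLaurent k σ p A) (B : Subalgebra k A)
    (hB : Subalgebra.toSubmodule B = brSubmodule E H J)
    (ιB : R →ₐ[k] ↥B) (hιB : ∀ r : R, ((ιB r : ↥B) : A) = E.ι r)
    (m0 : Ideal R) (hm0 : m0.IsMaximal) :
    ∃ W : SimpleWeightWitness.{max uR uA, uk, uR, uA} k ↥B ιB,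
      weightSpace ιB W.M m0 ≠ ⊥ := by
  classical
  haveI := hm0
  have hcomm := hD.comm
  -- the twisted maximal ideals
  have htwmax : ∀ γ : Fin n → ℤ, (twist σ m0 γ).IsMaximal := fun γ =>
    Ideal.comap_isMaximal_of_surjective _ ((σpow σ γ).symm.surjective)
  -- the left ideal generated by `ιB(m0)`
  set L0 : Ideal ↥B := Ideal.span (⇑ιB '' (m0 : Set R)) with hL0def
  have hL0good : ∀ x : ↥B, x ∈ L0 → (x : A) ∈ goodSet E m0 := by
    intro x hx
    refine Submodule.span_induction (p := fun y _ => ((y : ↥B) : A) ∈ goodSet E m0)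
      ?_ ?_ ?_ ?_ hx
    · rintro _ ⟨r, hr, rfl⟩
      rw [hιB]
      refine ⟨Finsupp.single 0 r, ?_, ?_⟩
      · rw [Trep_single, tpow_zero]; simp
      · intro γ
        rw [Finsupp.single_apply]
        split_ifs with h
        · subst h
          rw [mem_twist, σpow_zero]
          exact hr
        · exact zero_mem _
    · simpa using (goodSet E m0).zero_mem
    · intro a b _ _ ha hb
      push_cast
      exact add_mem ha hb
    · intro b y _ hy
      have : ((b • y : ↥B) : A) = (b : A) * (y : A) := by
        rw [smul_eq_mul]; push_cast; rfl
      rw [this]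
      exact goodSet_mul_left hcomm E m0 _ _ hy
  have hL0ne : L0 ≠ ⊤ := by
    intro h
    have h1 : ((1 : ↥B) : A) ∈ goodSet E m0 := hL0good 1 (h ▸ Submodule.mem_top)
    rw [OneMemClass.coe_one] at h1
    exact one_not_mem_goodSet E hm0.ne_top h1
  obtain ⟨N, hN, hLN⟩ := Ideal.exists_le_maximal L0 hL0ne
  haveI hsimp : IsSimpleModule ↥B (↥B ⧸ N) :=
    (isSimpleModule_iff_isCoatom (m := N)).2 (Ideal.isMaximal_def.mp hN)
  -- the generators of `L0` are in `N`
  have hgen : ∀ r ∈ m0, ιB r ∈ N := fun r hr =>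
    hLN (Ideal.subset_span ⟨r, hr, rfl⟩)
  -- weight vectors from graded components
  have hcompB : ∀ (α : Fin n → ℤ) (a : A), a ∈ brComponent E H J α → a ∈ B := by
    intro α a ha
    rw [← Subalgebra.mem_toSubmodule, hB]
    exact Submodule.mem_iSup_of_mem α ha
  have hcompwt : ∀ (α : Fin n → ℤ) (a : A) (hb : a ∈ B), a ∈ brComponent E H J α →
      (Submodule.Quotient.mk (⟨a, hb⟩ : ↥B) : ↥B ⧸ N) ∈
        weightSpace ιB (↥B ⧸ N) (twist σ m0 α) := by
    intro α a hb ha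
    rcases Submodule.mem_map.mp ha with ⟨y, hy, hEq⟩
    rcases Submodule.mem_map.mp hy with ⟨x, hx, rfl⟩
    rw [LinearMap.mulRight_apply, AlgHom.toLinearMap_apply] at hEq
    intro r hr
    have hr' : (σpow σ α).symm r ∈ m0 := hr
    have hTι : ((tpow E.t α : Aˣ) : A) * E.ι ((σpow σ α).symm r)
        = E.ι r * ((tpow E.t α : Aˣ) : A) := by
      rw [tpow_commrel E α, AlgEquiv.apply_symm_apply]
    have hA2 : E.ι r * a = a * E.ι ((σpow σ α).symm r) := by
      rw [← hEq]
      calc E.ι r * (E.ι x * ((tpow E.t α : Aˣ) : A))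
          = E.ι (r * x) * ((tpow E.t α : Aˣ) : A) := by
            rw [← mul_assoc, ← map_mul]
        _ = E.ι (x * r) * ((tpow E.t α : Aˣ) : A) := by rw [mul_comm r x]
        _ = E.ι x * (E.ι r * ((tpow E.t α : Aˣ) : A)) := by
            rw [map_mul, mul_assoc]
        _ = E.ι x * (((tpow E.t α : Aˣ) : A) * E.ι ((σpow σ α).symm r)) := by rw [hTι]
        _ = E.ι x * ((tpow E.t α : Aˣ) : A) * E.ι ((σpow σ α).symm r) := by
            rw [← mul_assoc]
    have hB2 : ιB r * (⟨a, hb⟩ : ↥B) = (⟨a, hb⟩ : ↥B) * ιB ((σpow σ α).symm r) := by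
      apply Subtype.ext
      push_cast
      rw [hιB, hιB]
      exact hA2
    have : ιB r • (Submodule.Quotient.mk (⟨a, hb⟩ : ↥B) : ↥B ⧸ N)
        = Submodule.Quotient.mk (ιB r * (⟨a, hb⟩ : ↥B)) := by
      rw [← Submodule.Quotient.mk_smul, smul_eq_mul]
    rw [this, hB2, Submodule.Quotient.mk_eq_zero]
    exact Ideal.mul_mem_left N _ (hgen _ hr')
  -- the sum of all weight spaces is everything
  set W : AddSubgroup (↥B ⧸ N) :=
    ⨆ m' : MaximalSpectrum R, weightSpace ιB (↥B ⧸ N) m'.asIdeal with hWdef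
  have hsup0 : ∀ z : ↥B ⧸ N, z ∈ W := by
    intro z
    obtain ⟨b, rfl⟩ := Submodule.Quotient.mk_surjective N z
    have hbB : (b : A) ∈ brSubmodule E H J := by
      rw [← hB]
      exact (Subalgebra.mem_toSubmodule B).2 b.2
    have hInd : ∃ h : (b : A) ∈ B,
        (Submodule.Quotient.mk (⟨(b : A), h⟩ : ↥B) : ↥B ⧸ N) ∈ W := by
      refine Submodule.iSup_induction (p := fun α => brComponent E H J α)
        (motive := fun a : A => ∃ h : a ∈ B,
          (Submodule.Quotient.mk (⟨a, h⟩ : ↥B) : ↥B ⧸ N) ∈ W) hbB ?_ ?_ ?_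
      · intro α a ha
        refine ⟨hcompB α a ha, ?_⟩
        have := hcompwt α a (hcompB α a ha) ha
        exact le_iSup (fun m' : MaximalSpectrum R =>
          weightSpace ιB (↥B ⧸ N) m'.asIdeal) ⟨twist σ m0 α, htwmax α⟩ this
      · refine ⟨B.zero_mem, ?_⟩
        have h0 : (⟨(0 : A), B.zero_mem⟩ : ↥B) = 0 := rfl
        rw [h0, Submodule.Quotient.mk_zero]
        exact zero_mem W
      · rintro a1 a2 ⟨h1, w1⟩ ⟨h2, w2⟩
        refine ⟨B.add_mem h1 h2, ?_⟩
        have hadd : (⟨a1 + a2, B.add_mem h1 h2⟩ : ↥B) = ⟨a1, h1⟩ + ⟨a2, h2⟩ := rfl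
        rw [hadd, Submodule.Quotient.mk_add]
        exact add_mem w1 w2
    obtain ⟨h, hw⟩ := hInd
    have hbeq : (⟨(b : A), h⟩ : ↥B) = b := Subtype.coe_eta b h
    rwa [hbeq] at hw
  have hsup : W = ⊤ := (AddSubgroup.eq_top_iff' _).mpr hsup0
  -- independence of the weight spaces
  have hind : iSupIndep fun m' : MaximalSpectrum R =>
      weightSpace ιB (↥B ⧸ N) m'.asIdeal := by
    intro m'
    rw [AddSubgroup.disjoint_def]
    intro v hv hv2
    have hm : m'.asIdeal.IsMaximal := m'.isMaximal
    let S : AddSubgroup (↥B ⧸ N) :=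
      { carrier := {w | ∃ r : R, r ∉ m'.asIdeal ∧ ιB r • w = 0}
        zero_mem' := ⟨1, (Ideal.ne_top_iff_one m'.asIdeal).mp hm.ne_top, smul_zero _⟩
        add_mem' := by
          rintro w1 w2 ⟨r, hrm, hrv⟩ ⟨s, hsm, hsv⟩
          refine ⟨r * s, fun hmem => ?_, ?_⟩
          · rcases hm.isPrime.mem_or_mem hmem with h | h
            exacts [hrm h, hsm h]
          · have h1 : ιB (r * s) • w1 = 0 := by
              rw [mul_comm, map_mul, mul_smul, hrv, smul_zero]
            have h2 : ιB (r * s) • w2 = 0 := by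
              rw [map_mul, mul_smul, hsv, smul_zero]
            rw [smul_add, h1, h2, add_zero]
        neg_mem' := by
          rintro w ⟨r, h1, h2⟩
          exact ⟨r, h1, by rw [smul_neg, h2, neg_zero]⟩ }
    have hle : (⨆ (m'' : MaximalSpectrum R) (_ : m'' ≠ m'),
        weightSpace ιB (↥B ⧸ N) m''.asIdeal) ≤ S := by
      refine iSup_le fun m'' => iSup_le fun hne => ?_
      intro w hw
      have hnle : ¬ m''.asIdeal ≤ m'.asIdeal := by
        intro hle2
        apply hne
        have : m''.asIdeal = m'.asIdeal := m''.isMaximal.eq_of_le hm.ne_top hle2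
        cases m''; cases m'
        simpa using this
      obtain ⟨r, hr1, hr2⟩ := SetLike.not_le_iff_exists.mp hnle
      exact ⟨r, hr2, hw r hr1⟩
    obtain ⟨r, hrm, hrx⟩ := hle hv2
    obtain ⟨y, i, hi, hyi⟩ := hm.exists_inv hrm
    calc v = ιB (y * r + i) • v := by rw [hyi, map_one, one_smul]
      _ = ιB y • (ιB r • v) + ιB i • v := by
          rw [map_add, add_smul, map_mul, mul_smul]
      _ = 0 := by rw [hrx, smul_zero, hv i hi, zero_add]
  -- nontriviality of the `m0` weight space
  have hne0 : (Submodule.Quotient.mk (1 : ↥B) : ↥B ⧸ N) ≠ 0 := by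
    rw [Ne, Submodule.Quotient.mk_eq_zero]
    exact fun h => hN.ne_top ((Ideal.eq_top_iff_one N).2 h)
  have hmem0 : (Submodule.Quotient.mk (1 : ↥B) : ↥B ⧸ N) ∈
      weightSpace ιB (↥B ⧸ N) m0 := by
    intro r hr
    have : ιB r • (Submodule.Quotient.mk (1 : ↥B) : ↥B ⧸ N)
        = Submodule.Quotient.mk (ιB r * 1) := by
      rw [← Submodule.Quotient.mk_smul, smul_eq_mul]
    rw [this, mul_one, Submodule.Quotient.mk_eq_zero]
    exact hgen r hr
  have hwsne : weightSpace ιB (↥B ⧸ N) m0 ≠ ⊥ := by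
    intro h
    rw [h] at hmem0
    exact hne0 (AddSubgroup.mem_bot.mp hmem0)
  -- transfer everything to `ULift`
  let eA : (↥B ⧸ N) ≃+ ULift.{uR} (↥B ⧸ N) :=
    { toFun := ULift.up, invFun := ULift.down, left_inv := fun _ => rfl,
      right_inv := fun _ => rfl, map_add' := fun _ _ => rfl }
  have hsm : ∀ (b : ↥B) (x : ↥B ⧸ N), (b • ULift.up x : ULift.{uR} (↥B ⧸ N)) = ULift.up (b • x) :=
    fun _ _ => rfl
  have hwsmap : ∀ m : Ideal R, AddSubgroup.map eA.toAddMonoidHom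
      (weightSpace ιB (↥B ⧸ N) m) = weightSpace ιB (ULift.{uR} (↥B ⧸ N)) m := by
    intro m
    ext v
    simp only [AddSubgroup.mem_map, AddEquiv.coe_toAddMonoidHom]
    constructor
    · rintro ⟨w, hw, rfl⟩
      intro r hr
      show ιB r • (ULift.up w : ULift.{uR} (↥B ⧸ N)) = 0
      rw [hsm, hw r hr]
      rfl
    · intro hv
      refine ⟨v.down, ?_, rfl⟩
      intro r hr
      have h1 : ιB r • v = 0 := hv r hr
      have h2 : (ιB r • v).down = ιB r • v.down := rfl
      rw [h1] at h2
      exact h2.symm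
  let geq : AddSubgroup (↥B ⧸ N) ≃o AddSubgroup (ULift.{uR} (↥B ⧸ N)) :=
    addSubgroupMapEquiv eA
  have hfun : (fun m' : MaximalSpectrum R =>
      weightSpace ιB (ULift.{uR} (↥B ⧸ N)) m'.asIdeal)
      = geq ∘ (fun m' : MaximalSpectrum R => weightSpace ιB (↥B ⧸ N) m'.asIdeal) := by
    funext m'
    exact (hwsmap m'.asIdeal).symm
  haveI : IsSimpleModule ↥B (ULift.{uR} (↥B ⧸ N)) :=
    IsSimpleModule.congr (ULift.moduleEquiv : ULift.{uR} (↥B ⧸ N) ≃ₗ[↥B] (↥B ⧸ N))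
  refine ⟨{ M := ULift.{uR} (↥B ⧸ N),
            simple := inferInstance,
            weight := ?_ }, ?_⟩
  · constructor
    · rw [hfun]
      have : (⨆ m' : MaximalSpectrum R,
          (geq ∘ fun m'' : MaximalSpectrum R =>
            weightSpace ιB (↥B ⧸ N) m''.asIdeal) m') = geq (⨆ m' : MaximalSpectrum R,
            weightSpace ιB (↥B ⧸ N) m'.asIdeal) := (geq.map_iSup _).symm
      rw [this, ← hWdef, hsup]
      exact geq.map_top
    · rw [hfun]
      exact (iSupIndep_map_orderIso_iff geq).mpr hind
  · show weightSpace ιB (ULift.{uR} (↥B ⧸ N)) m0 ≠ ⊥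
    rw [← hwsmap m0]
    intro h
    apply hwsne
    have h2 : geq (weightSpace ιB (↥B ⧸ N) m0) = ⊥ := h
    calc weightSpace ιB (↥B ⧸ N) m0
        = geq.symm (geq (weightSpace ιB (↥B ⧸ N) m0)) := (geq.symm_apply_apply _).symm
      _ = geq.symm ⊥ := by rw [h2]
      _ = ⊥ := geq.symm.map_bot

end BR
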